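/- arXiv:2510.16560 — 2 statements merged into one kernel-verified Lean document; each statement's English description precedes it below -/
import Mathlib

section
/- Fix a function e : 𝒳 × 𝒰 → (0,1) and Γ ≥ 1. If e' : 𝒳 × 𝒰 → (0,1) satisfies the Marginal Sensitivity Model with respect to a nominal score ē : 𝒳 → (0,1) with parameter √Γ (i.e., OR(e'(x,u), ē(x)) ∈ [Γ^{-1/2}, Γ^{1/2}] for all (x,u)), then e' satisfies Rosenbaum's Sensitivity Model with parameter Γ: for all x and all u₁,u₂, Γ^{-1} ≤ OR(e'(x,u₁), e'(x,u₂)) ≤ Γ. -/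
noncomputable def OR (a b : ℝ) : ℝ := (a / (1 - a)) / (b / (1 - b))

/-- MSM(√Γ) ⊆ RSM(Γ). -/
theorem stmt_4 {𝒳 𝒰 : Type*} (e' : 𝒳 × 𝒰 → ℝ) (ebar : 𝒳 → ℝ) (Γ : ℝ) (hΓ : 1 ≤ Γ)
    (he' : ∀ p, 0 < e' p ∧ e' p < 1) (hebar : ∀ x, 0 < ebar x ∧ ebar x < 1)
    (hMSM : ∀ p : 𝒳 × 𝒰, Real.sqrt Γ⁻¹ ≤ OR (e' p) (ebar p.1) ∧
      OR (e' p) (ebar p.1) ≤ Real.sqrt Γ) :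
    ∀ (x : 𝒳) (u₁ u₂ : 𝒰),
      Γ⁻¹ ≤ OR (e' (x, u₁)) (e' (x, u₂)) ∧ OR (e' (x, u₁)) (e' (x, u₂)) ≤ Γ := by
  intro x u₁ u₂
  have hΓ0 : (0:ℝ) < Γ := lt_of_lt_of_le one_pos hΓ
  have hs : Real.sqrt Γ⁻¹ = (Real.sqrt Γ)⁻¹ := by
    rw [Real.sqrt_inv]
  have hspos : 0 < Real.sqrt Γ := Real.sqrt_pos.mpr hΓ0
  have hsipos : 0 < (Real.sqrt Γ)⁻¹ := by positivity
  have hsq : Real.sqrt Γ * Real.sqrt Γ = Γ := Real.mul_self_sqrt hΓ0.le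
  -- odds positive
  have odds_pos : ∀ a : ℝ, 0 < a → a < 1 → 0 < a / (1 - a) := fun a h0 h1 =>
    div_pos h0 (by linarith)
  set e₁ := e' (x, u₁)
  set e₂ := e' (x, u₂)
  set eb := ebar x
  obtain ⟨h10, h11⟩ := he' (x, u₁)
  obtain ⟨h20, h21⟩ := he' (x, u₂)
  obtain ⟨hb0, hb1⟩ := hebar x
  have o1 : 0 < e₁ / (1 - e₁) := odds_pos _ h10 h11
  have o2 : 0 < e₂ / (1 - e₂) := odds_pos _ h20 h21
  have ob : 0 < eb / (1 - eb) := odds_pos _ hb0 hb1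
  obtain ⟨l1, u1⟩ := hMSM (x, u₁)
  obtain ⟨l2, u2⟩ := hMSM (x, u₂)
  simp only at l1 u1 l2 u2
  rw [hs] at l1 l2
  have key : OR e₁ e₂ = OR e₁ eb / OR e₂ eb := by
    unfold OR
    have n1 : (1:ℝ) - e₁ ≠ 0 := by linarith
    have n2 : (1:ℝ) - e₂ ≠ 0 := by linarith
    have nb : (1:ℝ) - eb ≠ 0 := by linarith
    field_simp
    rw [mul_div_mul_right _ _ (ne_of_gt hb0 : eb ≠ 0)]
  have r1pos : 0 < OR e₁ eb := div_pos o1 ob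
  have r2pos : 0 < OR e₂ eb := div_pos o2 ob
  rw [key]
  constructor
  · have h : Γ⁻¹ = (Real.sqrt Γ)⁻¹ / Real.sqrt Γ := by
      rw [div_eq_mul_inv, ← mul_inv, hsq]
    rw [h]
    gcongr
  · have h : Γ = Real.sqrt Γ / (Real.sqrt Γ)⁻¹ := by
      rw [div_eq_mul_inv, inv_inv, hsq]
    rw [h]
    gcongr
end

section
/- For e ∈ (0,1), Γ ≥ 1, and any y ∈ ℝ and q ∈ ℝ, the quantity E₊ := (1 + ((1−e)/e)·Γ^{sign(y−q)})^{-1} lies in (0,1) and satisfies Γ^{-1} ≤ OR(E₊, e) ≤ Γ; the same holds for E₋ := (1 + ((1−e)/e)·Γ^{-sign(y−q)})^{-1}. Hence the Dorn–Guo extremal weights are always feasible for the MSM constraint. -/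
lemma OR_eval (e t : ℝ) (he : 0 < e) (he' : e < 1) (ht0 : 0 < t)
    (hd : 0 < 1 + ((1 - e) / e) * t) :
    OR (1 + ((1 - e) / e) * t)⁻¹ e = t⁻¹ := by
  unfold OR
  have hD : 0 < e + (1 - e) * t := by nlinarith
  have h1 : (1:ℝ) - (1 + ((1 - e) / e) * t)⁻¹ = ((1 - e) / e * t) / (1 + (1 - e) / e * t) := by
    field_simp
    ring
  rw [h1, inv_eq_one_div, div_div_div_cancel_right₀]
  · rw [eq_comm, inv_eq_iff_eq_inv]
    have h2 : e - e ^ 2 ≠ 0 := by nlinarith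
    field_simp
    linear_combination -mul_inv_cancel₀ (sub_ne_zero.mpr he'.ne')
  · exact ne_of_gt hd

lemma key (e Γ t : ℝ) (he : 0 < e) (he' : e < 1) (hΓ : 1 ≤ Γ)
    (ht1 : Γ⁻¹ ≤ t) (ht2 : t ≤ Γ) :
    0 < (1 + ((1 - e) / e) * t)⁻¹ ∧ (1 + ((1 - e) / e) * t)⁻¹ < 1 ∧
      Γ⁻¹ ≤ OR (1 + ((1 - e) / e) * t)⁻¹ e ∧ OR (1 + ((1 - e) / e) * t)⁻¹ e ≤ Γ := by
  have hΓ0 : 0 < Γ := lt_of_lt_of_le one_pos hΓ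
  have ht0 : 0 < t := lt_of_lt_of_le (inv_pos.mpr hΓ0) ht1
  have hr : 0 < (1 - e) / e := div_pos (by linarith) he
  have hrt : 0 < ((1 - e) / e) * t := mul_pos hr ht0
  have hd : 0 < 1 + ((1 - e) / e) * t := by linarith
  have hOR := OR_eval e t he he' ht0 hd
  refine ⟨inv_pos.mpr hd, ?_, ?_, ?_⟩
  · rw [inv_lt_one_iff₀]; right; linarith
  · rw [hOR]
    exact inv_anti₀ ht0 ht2
  · rw [hOR]
    calc t⁻¹ ≤ (Γ⁻¹)⁻¹ := inv_anti₀ (inv_pos.mpr hΓ0) ht1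
      _ = Γ := inv_inv Γ

/-- The Dorn–Guo extremal weights are always feasible for the MSM constraint. -/
theorem stmt_6 (e Γ y q : ℝ) (he : 0 < e) (he' : e < 1) (hΓ : 1 ≤ Γ) :
    (0 < (1 + ((1 - e) / e) * Real.rpow Γ (Real.sign (y - q)))⁻¹ ∧
      (1 + ((1 - e) / e) * Real.rpow Γ (Real.sign (y - q)))⁻¹ < 1 ∧
      Γ⁻¹ ≤ OR (1 + ((1 - e) / e) * Real.rpow Γ (Real.sign (y - q)))⁻¹ e ∧
      OR (1 + ((1 - e) / e) * Real.rpow Γ (Real.sign (y - q)))⁻¹ e ≤ Γ) ∧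
    (0 < (1 + ((1 - e) / e) * Real.rpow Γ (-(Real.sign (y - q))))⁻¹ ∧
      (1 + ((1 - e) / e) * Real.rpow Γ (-(Real.sign (y - q))))⁻¹ < 1 ∧
      Γ⁻¹ ≤ OR (1 + ((1 - e) / e) * Real.rpow Γ (-(Real.sign (y - q))))⁻¹ e ∧
      OR (1 + ((1 - e) / e) * Real.rpow Γ (-(Real.sign (y - q))))⁻¹ e ≤ Γ) := by
  have hΓ0 : 0 < Γ := lt_of_lt_of_le one_pos hΓ
  have hinv : Γ⁻¹ ≤ 1 := inv_le_one_of_one_le₀ hΓ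
  have h1 : ∀ s : ℝ, s = -1 ∨ s = 0 ∨ s = 1 →
      Γ⁻¹ ≤ Real.rpow Γ s ∧ Real.rpow Γ s ≤ Γ := by
    rintro s (rfl | rfl | rfl)
    · show Γ⁻¹ ≤ Γ ^ (-1 : ℝ) ∧ Γ ^ (-1 : ℝ) ≤ Γ
      rw [Real.rpow_neg_one]
      exact ⟨le_refl _, le_trans hinv hΓ⟩
    · show Γ⁻¹ ≤ Γ ^ (0 : ℝ) ∧ Γ ^ (0 : ℝ) ≤ Γ
      rw [Real.rpow_zero]; exact ⟨hinv, hΓ⟩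
    · show Γ⁻¹ ≤ Γ ^ (1 : ℝ) ∧ Γ ^ (1 : ℝ) ≤ Γ
      rw [Real.rpow_one]; exact ⟨le_trans hinv hΓ, le_refl _⟩
  have hs : Real.sign (y - q) = -1 ∨ Real.sign (y - q) = 0 ∨ Real.sign (y - q) = 1 := by
    rcases Real.sign_apply_eq (y - q) with h | h | h <;> tauto
  have hns : -(Real.sign (y - q)) = -1 ∨ -(Real.sign (y - q)) = 0 ∨
      -(Real.sign (y - q)) = 1 := by
    rcases hs with h | h | h <;> rw [h] <;> norm_num
  obtain ⟨a1, a2⟩ := h1 _ hs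
  obtain ⟨b1, b2⟩ := h1 _ hns
  exact ⟨key e Γ _ he he' hΓ a1 a2, key e Γ _ he he' hΓ b1 b2⟩
end
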